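/- Let π = (n−1, d_2, …, d_n) be a nonincreasing graphic sequence whose largest term is n−1, and let π_1 = (d_2−1, …, d_n−1) be the sequence obtained by laying off the first term. Then for any graph G, π_1 is potentially G-graphic if and only if π is potentially (K_1 ∨ G)-graphic; consequently, for any graph H, π is potentially H-graphic if and only if π_1 is potentially D^(1)(H)-graphic. -/

import Mathlib

open SimpleGraph

/-- The degree of a vertex, defined without decidability assumptions. -/
noncomputable def gdeg {V : Type*} [Fintype V] (G : SimpleGraph V) (v : V) : ℕ :=
  {w | G.Adj v w}.ncard

/-- The multiset of vertex degrees of a finite simple graph. -/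
noncomputable def degMultiset {V : Type*} [Fintype V] (G : SimpleGraph V) : Multiset ℕ :=
  Finset.univ.val.map (gdeg G)

/-- A finite sequence of naturals is *graphic* if it is the degree sequence of
a finite simple graph (a *realization*). -/
def IsGraphic (π : List ℕ) : Prop :=
  ∃ G : SimpleGraph (Fin π.length), degMultiset G = (π : Multiset ℕ)

/-- `H` is contained in `G` as a (not necessarily induced) subgraph. -/
def ContainsSub {V : Type*} {W : Type*} (H : SimpleGraph V) (G : SimpleGraph W) : Prop :=
  ∃ f : V → W, Function.Injective f ∧ ∀ ⦃a b⦄, H.Adj a b → G.Adj (f a) (f b)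

/-- `π` is *potentially `H`-graphic*: some realization of `π` contains `H` as a subgraph. -/
def PotentiallyGraphic {V : Type*} (H : SimpleGraph V) (π : List ℕ) : Prop :=
  ∃ G : SimpleGraph (Fin π.length), degMultiset G = (π : Multiset ℕ) ∧ ContainsSub H G

/-- The potential number `σ(H,n)`: the minimum even integer such that every
(nonincreasing) graphic sequence of length `n` with sum at least that integer is
potentially `H`-graphic. -/
noncomputable def potentialNumber {V : Type*} (H : SimpleGraph V) (n : ℕ) : ℕ :=
  sInf {s : ℕ | Even s ∧ ∀ π : List ℕ, π.length = n → π.Pairwise (· ≥ ·) →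
      IsGraphic π → s ≤ π.sum → PotentiallyGraphic H π}

/-- The maximum degree `Δ(G)` of a finite graph. -/
noncomputable def maxDeg {V : Type*} [Fintype V] (G : SimpleGraph V) : ℕ :=
  Finset.univ.sup (gdeg G)

/-- The independence number `α(G)`. -/
noncomputable def indepNum {V : Type*} [Fintype V] (G : SimpleGraph V) : ℕ :=
  sSup {k | ∃ s : Finset V, s.card = k ∧ (s : Set V).Pairwise fun a b => ¬ G.Adj a b}

/-- `∇_i(H)`: the minimum of `Δ(F)` over induced subgraphs `F` of `H` of order `i`. -/
noncomputable def nabla {V : Type*} [Fintype V] (H : SimpleGraph V) (i : ℕ) : ℕ :=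
  sInf {d | ∃ s : Finset V, s.card = i ∧ maxDeg (SimpleGraph.induce (s : Set V) H) = d}

/-- The sequence `π̃_i(H,n) = ((n-1)^{k-i}, (k-i+∇_i(H)-1)^{n-k+i})`, with the last
term reduced by one if the sum would otherwise be odd. -/
noncomputable def tildePi {V : Type*} [Fintype V] (H : SimpleGraph V) (i n : ℕ) : List ℕ :=
  let k := Fintype.card V
  let d := k - i + nabla H i - 1
  let base := List.replicate (k - i) (n - 1) ++ List.replicate (n - k + i) d
  if Even base.sum then base else base.dropLast ++ [d - 1]

/-- `σ̃_i(H) = 2(k-i) + ∇_i(H) - 1`. -/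
noncomputable def sigmaTildeI {V : Type*} [Fintype V] (H : SimpleGraph V) (i : ℕ) : ℕ :=
  2 * (Fintype.card V - i) + nabla H i - 1

/-- `σ̃(H) = max_{α(H)+1 ≤ i ≤ k} σ̃_i(H)`. -/
noncomputable def sigmaTilde {V : Type*} [Fintype V] (H : SimpleGraph V) : ℕ :=
  (Finset.Icc (_root_.indepNum H + 1) (Fintype.card V)).sup (sigmaTildeI H)

/-- The family `P(H,n)` of extremal nonrealizing sequences. -/
noncomputable def potSet {V : Type*} [Fintype V] (H : SimpleGraph V) (n : ℕ) : Set (List ℕ) :=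
  {π | ∃ i ∈ Finset.Icc (_root_.indepNum H + 1) (Fintype.card V),
      sigmaTildeI H i = sigmaTilde H ∧ π = tildePi H i n}

/-- `i*(H)`: the least index `i ∈ {α(H)+1, …, k}` with `σ̃_i(H) = σ̃(H)`. -/
noncomputable def iStar {V : Type*} [Fintype V] (H : SimpleGraph V) : ℕ :=
  sInf {i | i ∈ Finset.Icc (_root_.indepNum H + 1) (Fintype.card V) ∧ sigmaTildeI H i = sigmaTilde H}

/-- `‖π₁ - π₂‖ = Σ_j |x_j - y_j|`, padding the shorter sequence with zeros. -/
def seqDist (π₁ π₂ : List ℕ) : ℕ :=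
  ((List.range (max π₁.length π₂.length)).map fun j =>
    Nat.dist (π₁.getD j 0) (π₂.getD j 0)).sum

/-- `H` is stable with respect to the potential number (σ-stable). -/
def SigmaStable {V : Type*} [Fintype V] (H : SimpleGraph V) : Prop :=
  ∀ ε : ℝ, 0 < ε → ∃ δ : ℝ, 0 < δ ∧ ∃ n₀ : ℕ, ∀ n : ℕ, n₀ ≤ n →
    ∀ π : List ℕ, π.length = n → π.Pairwise (· ≥ ·) → IsGraphic π →
      ¬ PotentiallyGraphic H π →
      (potentialNumber H n : ℝ) - δ * n ≤ (π.sum : ℝ) →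
      ∃ π' ∈ potSet H n, (seqDist π π' : ℝ) < ε * n

/-- The nonincreasing degree sequence of a finite graph. -/
noncomputable def degList {V : Type*} [Fintype V] (G : SimpleGraph V) : List ℕ :=
  ((degMultiset G).sort (· ≤ ·)).reverse

/-- `π` is degree-sufficient for `H`: termwise, `π` dominates the nonincreasing
degree sequence of `H`. -/
def DegreeSufficient {V : Type*} [Fintype V] (H : SimpleGraph V) (π : List ℕ) : Prop :=
  Fintype.card V ≤ π.length ∧ ∀ i < Fintype.card V, (degList H).getD i 0 ≤ π.getD i 0

/-- `H` is weakly σ-stable. -/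
def WeaklySigmaStable {V : Type*} [Fintype V] (H : SimpleGraph V) : Prop :=
  ∀ ε : ℝ, 0 < ε → ∃ δ : ℝ, 0 < δ ∧ ∃ n₀ : ℕ, ∀ n : ℕ, n₀ ≤ n →
    ∀ π : List ℕ, π.length = n → π.Pairwise (· ≥ ·) → IsGraphic π →
      DegreeSufficient H π →
      ¬ PotentiallyGraphic H π →
      (potentialNumber H n : ℝ) - δ * n ≤ (π.sum : ℝ) →
      ∃ π' ∈ potSet H n, (seqDist π π' : ℝ) < ε * n

/-- The join `G ∨ H` of two graphs on disjoint vertex sets. -/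
def graphJoin {V : Type*} {W : Type*} (G : SimpleGraph V) (H : SimpleGraph W) :
    SimpleGraph (V ⊕ W) where
  Adj x y :=
    match x, y with
    | .inl a, .inl b => G.Adj a b
    | .inr a, .inr b => H.Adj a b
    | .inl _, .inr _ => True
    | .inr _, .inl _ => True
  symm := by
    constructor
    rintro (a | a) (b | b) h
    · exact G.symm.symm _ _ h
    · trivial
    · trivial
    · exact H.symm.symm _ _ h
  loopless := by
    constructor
    rintro (a | a) h
    · exact G.loopless.irrefl a h
    · exact H.loopless.irrefl a h

/-- The double star `S_{x,y}`: two adjacent centers (vertices `0` and `1`), with the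
first center adjacent to `x` leaves and the second to `y` leaves, so that the centers
have degrees `x+1` and `y+1`. -/
def doubleStar (x y : ℕ) : SimpleGraph (Fin (x + y + 2)) :=
  SimpleGraph.fromRel fun a b =>
    (a.val = 0 ∧ b.val = 1) ∨
    (a.val = 0 ∧ 2 ≤ b.val ∧ b.val < x + 2) ∨
    (a.val = 1 ∧ x + 2 ≤ b.val)

/-- Laying off the term at (0-based) position `i`: delete it and subtract one from
the `d_i` largest remaining terms. -/
def layOffAt (π : List ℕ) (i : ℕ) : List ℕ :=
  let d := π.getD i 0
  let rest := π.take i ++ π.drop (i + 1)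
  (rest.take d).map (· - 1) ++ rest.drop d

/-!
A vertex of degree `n - 1` in a graph on `n` vertices is universal, so every realization of
`π = (n-1, d₂, …, dₙ)` is the cone `K₁ ∨ (G' - v)` over a realization `G' - v` of `π₁`; conversely,
coning a realization of `π₁` realizes `π`, as the `dᵢ` are positive. Containment passes through the
cone in both directions: a copy of `K₁ ∨ G` in `G'` gives a copy of `G` in `G' - v` for any `v`,
a copy of `H` in `G'` gives a copy of `H[s]` in `G' - v` for some `s` missing one vertex, and
`H ⊑ K₁ ∨ H[s]` for such `s`.
-/
namespace SimpleGraph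

variable {V W U : Type*}

theorem containsSub_iff_isContained {H : SimpleGraph U} {G : SimpleGraph V} :
    ContainsSub H G ↔ H ⊑ G :=
  ⟨fun ⟨f, hf, hadj⟩ => ⟨⟨⟨f, fun h => hadj h⟩, hf⟩⟩,
    fun ⟨f⟩ => ⟨f, f.injective, fun _ _ h => f.toHom.map_adj h⟩⟩

theorem gdeg_eq_degree [Fintype V] (G : SimpleGraph V) (v : V) [Fintype (G.neighborSet v)] :
    gdeg G v = G.degree v := by
  rw [gdeg, ← card_neighborSet_eq_degree, ← Nat.card_eq_fintype_card, Nat.card_coe_set_eq]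
  rfl

theorem gdeg_congr [Fintype V] [Fintype W] {G : SimpleGraph V} {G' : SimpleGraph W}
    (e : G ≃g G') (v : V) : gdeg G' (e v) = gdeg G v := by
  have : {w | G'.Adj (e v) w} = e '' {w | G.Adj v w} := by
    ext w
    obtain ⟨w, rfl⟩ := e.surjective w
    simp [e.injective.eq_iff, e.map_adj_iff]
  rw [gdeg, gdeg, this, Set.ncard_image_of_injective _ e.injective]

theorem degMultiset_congr [Fintype V] [Fintype W] {G : SimpleGraph V} {G' : SimpleGraph W}
    (e : G ≃g G') : degMultiset G = degMultiset G' := by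
  rw [degMultiset, degMultiset, ← Multiset.map_univ_val_equiv e.toEquiv, Multiset.map_map]
  exact Multiset.map_congr rfl fun v _ => (gdeg_congr e v).symm

theorem card_degMultiset [Fintype V] (G : SimpleGraph V) :
    Multiset.card (degMultiset G) = Fintype.card V := by
  simp [degMultiset, Finset.card_univ]

theorem gdeg_graphJoin_inl [Fintype V] [Fintype W] (K : SimpleGraph V) (G : SimpleGraph W)
    (a : V) : gdeg (graphJoin K G) (.inl a) = gdeg K a + Fintype.card W := by
  have : {x | (graphJoin K G).Adj (.inl a) x} =
      Sum.inl '' {y | K.Adj a y} ∪ Set.range Sum.inr := by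
    ext (y | y) <;> simp [graphJoin]
  rw [gdeg, this, Set.ncard_union_eq, Set.ncard_image_of_injective _ Sum.inl_injective,
    Set.ncard_range_of_injective Sum.inr_injective, Nat.card_eq_fintype_card, gdeg]
  exact Set.disjoint_left.mpr (by simp)

theorem gdeg_graphJoin_inr [Fintype V] [Fintype W] (K : SimpleGraph V) (G : SimpleGraph W)
    (b : W) : gdeg (graphJoin K G) (.inr b) = gdeg G b + Fintype.card V := by
  have : {x | (graphJoin K G).Adj (.inr b) x} =
      Sum.inr '' {y | G.Adj b y} ∪ Set.range Sum.inl := by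
    ext (y | y) <;> simp [graphJoin]
  rw [gdeg, this, Set.ncard_union_eq, Set.ncard_image_of_injective _ Sum.inr_injective,
    Set.ncard_range_of_injective Sum.inl_injective, Nat.card_eq_fintype_card, gdeg]
  exact Set.disjoint_left.mpr (by simp)

theorem degMultiset_graphJoin [Fintype V] [Fintype W] (K : SimpleGraph V) (G : SimpleGraph W) :
    degMultiset (graphJoin K G) =
      (degMultiset K).map (· + Fintype.card W) + (degMultiset G).map (· + Fintype.card V) := by
  simp only [degMultiset, ← Finset.univ_disjSum_univ, Finset.val_disjSum, Multiset.disjSum,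
    Multiset.map_add, Multiset.map_map]
  congr 1 <;> exact Multiset.map_congr rfl fun x _ => by
    simp [gdeg_graphJoin_inl, gdeg_graphJoin_inr]

theorem degMultiset_top_fin_one : degMultiset (⊤ : SimpleGraph (Fin 1)) = {0} := by
  have : gdeg (⊤ : SimpleGraph (Fin 1)) 0 = 0 := by simp [gdeg, Fin.fin_one_eq_zero]
  simp [degMultiset, Finset.univ_unique, this]

theorem isUniversal_of_gdeg_eq [Fintype V] {G : SimpleGraph V} {v : V}
    (hv : gdeg G v = Fintype.card V - 1) : G.IsUniversal v := by
  classical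
  rwa [gdeg_eq_degree, degree_eq_card_sub_one] at hv

def IsUniversal.isoGraphJoin [DecidableEq V] {G : SimpleGraph V} {v : V}
    (hv : G.IsUniversal v) : graphJoin (⊤ : SimpleGraph (Fin 1)) (G.induce {v}ᶜ) ≃g G where
  toEquiv := (Equiv.sumCongr (Equiv.ofUnique (Fin 1) ({v} : Set V)) (Equiv.refl _)).trans
    (Equiv.Set.sumCompl {v})
  map_rel_iff' := by
    rintro (a | ⟨a, ha⟩) (b | ⟨b, hb⟩)
    · simp [graphJoin, Subsingleton.elim a b]
    · simpa [graphJoin] using hv (Ne.symm hb)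
    · simpa [graphJoin] using (hv (Ne.symm ha)).symm
    · simp [graphJoin]

theorem graphJoin_isContained_graphJoin {V' W' : Type*} {K : SimpleGraph V}
    {K' : SimpleGraph V'} {G : SimpleGraph W} {G' : SimpleGraph W'} (hK : K ⊑ K')
    (hG : G ⊑ G') :
    graphJoin K G ⊑ graphJoin K' G' := by
  obtain ⟨f⟩ := hK
  obtain ⟨g⟩ := hG
  refine ⟨⟨⟨Sum.map f g, ?_⟩, f.injective.sumMap g.injective⟩⟩
  rintro (a | a) (b | b) h
  · exact f.toHom.map_adj h
  · trivial
  · trivial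
  · exact g.toHom.map_adj h

theorem degMultiset_eq_cons_of_isUniversal [Fintype V] [DecidableEq V] {G : SimpleGraph V}
    {v : V} (hv : G.IsUniversal v) :
    degMultiset G = (Fintype.card V - 1) ::ₘ (degMultiset (G.induce {v}ᶜ)).map (· + 1) := by
  have hcard := Fintype.card_congr hv.isoGraphJoin.toEquiv
  rw [Fintype.card_sum, Fintype.card_fin] at hcard
  rw [← degMultiset_congr hv.isoGraphJoin, degMultiset_graphJoin, degMultiset_top_fin_one,
    Fintype.card_fin, Multiset.map_singleton, Multiset.singleton_add]
  congr 1
  omega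

/-- The vertex of `G` sent to `v`, if any, is moved to the image of the cone vertex, which is
adjacent to the images of all vertices of `G`. -/
theorem IsContained.induce_compl_of_graphJoin_top [DecidableEq V] {G : SimpleGraph W}
    {G' : SimpleGraph V} (h : graphJoin (⊤ : SimpleGraph (Fin 1)) G ⊑ G') (v : V) :
    G ⊑ G'.induce {v}ᶜ := by
  obtain ⟨f⟩ := h
  set u := f (.inl 0)
  have hcone : ∀ b, G'.Adj u (f (.inr b)) := fun b => f.toHom.map_adj (by trivial)
  have hne : ∀ b, f (.inr b) ≠ u := fun b h => Sum.inr_ne_inl (f.injective h)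
  let g : W → V := fun b => Equiv.swap u v (f (.inr b))
  have hg : g.Injective := fun a b h => Sum.inr_injective (f.injective ((Equiv.injective _) h))
  refine ⟨⟨⟨fun b => ⟨g b, ?_⟩, fun {a b} hab => ?_⟩,
    fun a b h => hg (congrArg Subtype.val h)⟩⟩
  · simpa [g, Equiv.swap_apply_eq_iff] using hne b
  · have hfab : G'.Adj (f (.inr a)) (f (.inr b)) := f.toHom.map_adj hab
    show G'.Adj (g a) (g b)
    by_cases ha : f (.inr a) = v
    · have hb : f (.inr b) ≠ v := fun hb =>
        hab.ne (Sum.inr_injective (f.injective (ha.trans hb.symm)))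
      simpa [g, ha, Equiv.swap_apply_of_ne_of_ne (hne b) hb] using hcone b
    by_cases hb : f (.inr b) = v
    · simpa [g, hb, Equiv.swap_apply_of_ne_of_ne (hne a) ha] using (hcone a).symm
    · simpa [g, Equiv.swap_apply_of_ne_of_ne (hne a) ha, Equiv.swap_apply_of_ne_of_ne (hne b) hb]
        using hfab

theorem IsContained.exists_induce_compl [Fintype U] {H : SimpleGraph U} {G : SimpleGraph V}
    (h : H ⊑ G) (v : V) :
    ∃ s : Finset U, s.card = Fintype.card U - 1 ∧ H.induce s ⊑ G.induce {v}ᶜ := by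
  classical
  obtain ⟨f⟩ := h
  have hfiber : (Finset.univ.filter (f · = v)).card ≤ 1 :=
    Finset.card_le_one.mpr fun a ha b hb => f.injective (by simp_all)
  have hcard : Fintype.card U - 1 ≤ (Finset.univ.filter fun x => ¬ f x = v).card := by
    have := Finset.card_filter_add_card_filter_not (s := Finset.univ) (f · = v)
    rw [Finset.card_univ] at this
    omega
  obtain ⟨s, hs, hscard⟩ := Finset.exists_subset_card_eq hcard
  refine ⟨s, hscard, ⟨⟨⟨fun x => ⟨f x, ?_⟩, fun hab => f.toHom.map_adj hab⟩,
    fun a b hab => Subtype.ext (f.injective (congrArg Subtype.val hab))⟩⟩⟩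
  simpa using (Finset.mem_filter.mp (hs x.2)).2

theorem isContained_graphJoin_top_induce [Fintype U] {H : SimpleGraph U} {s : Finset U}
    (hs : s.card = Fintype.card U - 1) :
    H ⊑ graphJoin (⊤ : SimpleGraph (Fin 1)) (H.induce s) := by
  classical
  have hout : ∀ a ∉ s, ∀ b ∉ s, a = b := by
    have : sᶜ.card ≤ 1 := by rw [Finset.card_compl]; omega
    exact fun a ha b hb => Finset.card_le_one.mp this a (by simpa) b (by simpa)
  let f : U → Fin 1 ⊕ (s : Set U) := fun x => if hx : x ∈ s then .inr ⟨x, hx⟩ else .inl 0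
  refine ⟨⟨⟨f, fun {a b} hab => ?_⟩, fun a b hab => ?_⟩⟩
  · by_cases ha : a ∈ s <;> by_cases hb : b ∈ s
    · simpa [f, ha, hb, graphJoin] using hab
    · simp [f, ha, hb, graphJoin]
    · simp [f, ha, hb, graphJoin]
    · exact absurd (hout a ha b hb) hab.ne
  · by_cases ha : a ∈ s <;> by_cases hb : b ∈ s
    · simpa [f, ha, hb] using hab
    · simp [f, ha, hb] at hab
    · simp [f, ha, hb] at hab
    · exact hout a ha b hb

end SimpleGraph

section PotentiallyGraphic

variable {V W U : Type*}

theorem PotentiallyGraphic.of_degMultiset_eq [Fintype V] {H : SimpleGraph U}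
    {G : SimpleGraph V} {π : List ℕ} (hG : degMultiset G = π) (hH : H ⊑ G) :
    PotentiallyGraphic H π := by
  have hcard : Fintype.card (Fin π.length) = Fintype.card V := by
    rw [Fintype.card_fin, ← card_degMultiset G, hG, Multiset.coe_card]
  let e := Iso.comap (Fintype.equivOfCardEq hcard) G
  exact ⟨_, (degMultiset_congr e).trans hG,
    containsSub_iff_isContained.mpr (hH.trans e.symm.isContained)⟩

theorem PotentiallyGraphic.mono {H : SimpleGraph U} {K : SimpleGraph W} {π : List ℕ}
    (hHK : H ⊑ K) (h : PotentiallyGraphic K π) : PotentiallyGraphic H π :=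
  let ⟨G, hG, hK⟩ := h
  ⟨G, hG, containsSub_iff_isContained.mpr (hHK.trans (containsSub_iff_isContained.mp hK))⟩

theorem exists_eq_map_succ_degMultiset_induce_compl [Fintype V] [DecidableEq V]
    {G : SimpleGraph V} {t : List ℕ} (h : degMultiset G = ↑(t.length :: t)) :
    ∃ v, (t : Multiset ℕ) = (degMultiset (G.induce {v}ᶜ)).map (· + 1) := by
  have hcard : Fintype.card V - 1 = t.length := by
    rw [← card_degMultiset G, h, Multiset.coe_card, List.length_cons, Nat.add_sub_cancel]
  obtain ⟨v, -, hv⟩ :=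
    Multiset.mem_map.mp (h ▸ List.mem_cons_self : t.length ∈ degMultiset G)
  refine ⟨v, (Multiset.cons_inj_right t.length).mp ?_⟩
  rw [Multiset.cons_coe, ← h, ← hcard]
  exact degMultiset_eq_cons_of_isUniversal (isUniversal_of_gdeg_eq (hv.trans hcard.symm))

theorem coe_map_pred_of_eq_map_succ {t : List ℕ} {m : Multiset ℕ}
    (h : (t : Multiset ℕ) = m.map (· + 1)) : (t.map (· - 1) : Multiset ℕ) = m := by
  rw [← Multiset.map_coe, h, Multiset.map_map]
  simp

theorem PotentiallyGraphic.of_graphJoin_top {G : SimpleGraph W} {t : List ℕ}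
    (h : PotentiallyGraphic (graphJoin (⊤ : SimpleGraph (Fin 1)) G) (t.length :: t)) :
    PotentiallyGraphic G (t.map (· - 1)) := by
  obtain ⟨G', hG', hc⟩ := h
  obtain ⟨v, hv⟩ := exists_eq_map_succ_degMultiset_induce_compl hG'
  exact .of_degMultiset_eq (coe_map_pred_of_eq_map_succ hv).symm
    ((containsSub_iff_isContained.mp hc).induce_compl_of_graphJoin_top v)

theorem PotentiallyGraphic.exists_induce [Fintype U] {H : SimpleGraph U} {t : List ℕ}
    (h : PotentiallyGraphic H (t.length :: t)) :
    ∃ s : Finset U, s.card = Fintype.card U - 1 ∧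
      PotentiallyGraphic (H.induce (s : Set U)) (t.map (· - 1)) := by
  obtain ⟨G', hG', hc⟩ := h
  obtain ⟨v, hv⟩ := exists_eq_map_succ_degMultiset_induce_compl hG'
  obtain ⟨s, hs, hsc⟩ := (containsSub_iff_isContained.mp hc).exists_induce_compl v
  exact ⟨s, hs, .of_degMultiset_eq (coe_map_pred_of_eq_map_succ hv).symm hsc⟩

theorem PotentiallyGraphic.graphJoin_top {G : SimpleGraph W} {t : List ℕ}
    (h : PotentiallyGraphic G (t.map (· - 1))) (ht : ∀ x ∈ t, 0 < x) :
    PotentiallyGraphic (graphJoin (⊤ : SimpleGraph (Fin 1)) G) (t.length :: t) := by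
  obtain ⟨G₁, hG₁, hc⟩ := h
  have hsucc : (t.map (· - 1)).map (· + 1) = t := by
    rw [List.map_map]
    exact (List.map_congr_left fun x hx => Nat.sub_add_cancel (ht x hx)).trans
      (List.map_id t)
  refine .of_degMultiset_eq (G := graphJoin ⊤ G₁) ?_
    (graphJoin_isContained_graphJoin .rfl (containsSub_iff_isContained.mp hc))
  rw [degMultiset_graphJoin, degMultiset_top_fin_one, hG₁, Fintype.card_fin, Fintype.card_fin,
    List.length_map, Multiset.map_singleton, Multiset.map_coe, hsucc, Multiset.singleton_add,
    Multiset.cons_coe, zero_add]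

theorem IsGraphic.pos_of_cons_length {t : List ℕ} (h : IsGraphic (t.length :: t)) :
    ∀ x ∈ t, 0 < x := by
  obtain ⟨G, hG⟩ := h
  obtain ⟨v, hv⟩ := exists_eq_map_succ_degMultiset_induce_compl hG
  intro x hx
  obtain ⟨y, -, rfl⟩ := Multiset.mem_map.mp (hv ▸ Multiset.mem_coe.mpr hx)
  exact Nat.succ_pos y

end PotentiallyGraphic

theorem layOffDominating_general (n : ℕ) (hn : 1 ≤ n) (π : List ℕ) (hlen : π.length = n)
    (hgraphic : IsGraphic π)
    (hhead : π.getD 0 0 = n - 1) :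
    (∀ {W : Type} [Fintype W] (G : SimpleGraph W),
        PotentiallyGraphic G ((π.drop 1).map (· - 1)) ↔
          PotentiallyGraphic (graphJoin (⊤ : SimpleGraph (Fin 1)) G) π) ∧
    (∀ {U : Type} [Fintype U] (H : SimpleGraph U),
        PotentiallyGraphic H π ↔
          ∃ s : Finset U, s.card = Fintype.card U - 1 ∧
            PotentiallyGraphic (SimpleGraph.induce (s : Set U) H)
              ((π.drop 1).map (· - 1))) := by
  obtain ⟨t, rfl⟩ : ∃ t, π = t.length :: t := by
    cases π with
    | nil => simp only [List.length_nil] at hlen; omega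
    | cons d t =>
      simp only [List.length_cons, List.getD_cons_zero] at hlen hhead
      exact ⟨t, by rw [hhead, ← hlen, Nat.add_sub_cancel]⟩
  have join_iff : ∀ {W : Type} [Fintype W] (G : SimpleGraph W),
      PotentiallyGraphic G (t.map (· - 1)) ↔
        PotentiallyGraphic (graphJoin (⊤ : SimpleGraph (Fin 1)) G) (t.length :: t) :=
    fun _ => ⟨fun h => h.graphJoin_top hgraphic.pos_of_cons_length, .of_graphJoin_top⟩
  simp only [List.drop_succ_cons, List.drop_zero]
  refine ⟨join_iff, fun H => ⟨PotentiallyGraphic.exists_induce, ?_⟩⟩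
  rintro ⟨s, hs, h⟩
  exact ((join_iff _).mp h).mono (isContained_graphJoin_top_induce hs)

/-- **Laying off a dominating term.** If `π = (n−1, d₂, …, d_n)` is a nonincreasing graphic
sequence and `π₁ = (d₂−1, …, d_n−1)`, then `π₁` is potentially `G`-graphic iff `π` is
potentially `(K₁ ∨ G)`-graphic; consequently `π` is potentially `H`-graphic iff `π₁` is
potentially `D⁽¹⁾(H)`-graphic. -/
theorem layOffDominating (n : ℕ) (hn : 1 ≤ n) (π : List ℕ) (hlen : π.length = n)
    (hsorted : π.Pairwise (· ≥ ·)) (hgraphic : IsGraphic π)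
    (hhead : π.getD 0 0 = n - 1) :
    (∀ {W : Type} [Fintype W] (G : SimpleGraph W),
        PotentiallyGraphic G ((π.drop 1).map (· - 1)) ↔
          PotentiallyGraphic (graphJoin (⊤ : SimpleGraph (Fin 1)) G) π) ∧
    (∀ {U : Type} [Fintype U] (H : SimpleGraph U),
        PotentiallyGraphic H π ↔
          ∃ s : Finset U, s.card = Fintype.card U - 1 ∧
            PotentiallyGraphic (SimpleGraph.induce (s : Set U) H)
              ((π.drop 1).map (· - 1))) :=
  layOffDominating_general n hn π hlen hgraphic hhead
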